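/- arXiv:2406.05911 — 3 statements merged into one kernel-verified Lean document; each statement's English description precedes it below -/
import Mathlib

section
/- For a convex set K and any ε > 0, the map ν ↦ w(B(ν,ε)∩K) is concave on K: for ν₁,ν₂ ∈ K and α ∈ [0,1], w(B(αν₁+(1−α)ν₂, ε) ∩ K) ≥ α·w(B(ν₁,ε)∩K) + (1−α)·w(B(ν₂,ε)∩K). -/
open MeasureTheory Metric

noncomputable def stdGaussian (ι : Type*) [Fintype ι] : Measure (EuclideanSpace ℝ ι) :=
  (Measure.pi fun _ : ι => ProbabilityTheory.gaussianReal 0 1).map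
    (MeasurableEquiv.toLp 2 (ι → ℝ))

noncomputable def gaussianWidth {ι : Type*} [Fintype ι] (T : Set (EuclideanSpace ℝ ι)) : ℝ :=
  ∫ x, sSup ((fun t => (inner ℝ x t : ℝ)) '' T) ∂(stdGaussian ι)

/-!
The Gaussian width is the Gaussian mean of the support function `h_S x = sup_{t ∈ S} ⟪x, t⟫`,
which is monotone in `S` and additive and positively homogeneous under Minkowski combinations of
nonempty bounded sets. By convexity, `α • (B(ν₁, ε) ∩ K) + (1 - α) • (B(ν₂, ε) ∩ K)` lies in
`B(α ν₁ + (1 - α) ν₂, ε) ∩ K`, so taking Gaussian means of the support functions gives the claim.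
-/

open Bornology Set
open scoped NNReal Pointwise

section SupportFunction

variable {E : Type*} [NormedAddCommGroup E] [InnerProductSpace ℝ E] {S T : Set E}

noncomputable def supportFunction (S : Set E) (x : E) : ℝ :=
  sSup ((fun t => (inner ℝ x t : ℝ)) '' S)

lemma bddAbove_inner_image (hS : IsBounded S) (x : E) :
    BddAbove ((fun t => (inner ℝ x t : ℝ)) '' S) := by
  obtain ⟨R, hR⟩ := isBounded_iff_forall_norm_le.1 hS
  refine ⟨‖x‖ * R, forall_mem_image.2 fun t ht => ?_⟩
  exact (real_inner_le_norm x t).trans (by gcongr; exact hR t ht)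

lemma supportFunction_zero (S : Set E) : supportFunction S 0 = 0 := by
  rcases S.eq_empty_or_nonempty with rfl | hS <;> simp [supportFunction, *]

lemma supportFunction_mono (hS : S.Nonempty) (hT : IsBounded T) (hST : S ⊆ T) (x : E) :
    supportFunction S x ≤ supportFunction T x :=
  csSup_le_csSup (bddAbove_inner_image hT x) (hS.image _) (image_mono hST)

lemma supportFunction_add {A B : Set E} (hA : A.Nonempty) (hA' : IsBounded A)
    (hB : B.Nonempty) (hB' : IsBounded B) (x : E) :
    supportFunction (A + B) x = supportFunction A x + supportFunction B x := by
  rw [supportFunction, show (fun t => (inner ℝ x t : ℝ)) = innerₛₗ ℝ x from rfl, image_add]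
  exact csSup_add (hA.image _) (bddAbove_inner_image hA' x) (hB.image _)
    (bddAbove_inner_image hB' x)

lemma supportFunction_smul {a : ℝ} (ha : 0 ≤ a) (x : E) :
    supportFunction (a • S) x = a * supportFunction S x := by
  rw [supportFunction, show (fun t => (inner ℝ x t : ℝ)) = innerₛₗ ℝ x from rfl, image_smul_set,
    Real.sSup_smul_of_nonneg ha, smul_eq_mul]
  rfl

lemma lipschitzWith_supportFunction {R : ℝ≥0} (hS : ∀ t ∈ S, ‖t‖ ≤ R) :
    LipschitzWith R (supportFunction S) := by
  rcases S.eq_empty_or_nonempty with rfl | hne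
  · convert LipschitzWith.const' (α := E) (0 : ℝ)
    simp [supportFunction]
  have hbdd : IsBounded S := isBounded_iff_forall_norm_le.2 ⟨R, hS⟩
  refine LipschitzWith.of_le_add_mul R fun x y => csSup_le (hne.image _) ?_
  rintro _ ⟨t, ht, rfl⟩
  have hy : inner ℝ y t ≤ supportFunction S y :=
    le_csSup (bddAbove_inner_image hbdd y) ⟨t, ht, rfl⟩
  have hxy : inner ℝ (x - y) t ≤ R * dist x y := calc
    inner ℝ (x - y) t ≤ ‖x - y‖ * ‖t‖ := real_inner_le_norm _ _
    _ ≤ dist x y * R := by rw [dist_eq_norm]; gcongr; exact hS t ht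
    _ = R * dist x y := mul_comm _ _
  rw [inner_sub_left] at hxy
  linarith

lemma integrable_supportFunction [MeasurableSpace E] [OpensMeasurableSpace E] {μ : Measure E}
    (hμ : Integrable (‖·‖) μ) (hS : IsBounded S) : Integrable (supportFunction S) μ := by
  obtain ⟨R, -, hR⟩ := hS.exists_pos_norm_le
  have hL := lipschitzWith_supportFunction (R := R.toNNReal)
    fun t ht => (hR t ht).trans (Real.le_coe_toNNReal R)
  refine (hμ.const_mul R.toNNReal).mono' hL.continuous.aestronglyMeasurable
    (ae_of_all _ fun x => ?_)
  simpa [supportFunction_zero] using hL.dist_le_mul x 0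

end SupportFunction

section GaussianWidth

variable {ι : Type*} [Fintype ι] {S T : Set (EuclideanSpace ℝ ι)}

lemma integrable_norm_stdGaussian : Integrable (‖·‖) (stdGaussian ι) := by
  rw [stdGaussian, MeasurableEquiv.coe_toLp, ProbabilityTheory.map_pi_eq_stdGaussian]
  exact ProbabilityTheory.IsGaussian.integrable_id.norm

lemma gaussianWidth_eq_integral_supportFunction (S : Set (EuclideanSpace ℝ ι)) :
    gaussianWidth S = ∫ x, supportFunction S x ∂(stdGaussian ι) := rfl

lemma integrable_supportFunction_stdGaussian (hS : IsBounded S) :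
    Integrable (supportFunction S) (stdGaussian ι) :=
  integrable_supportFunction integrable_norm_stdGaussian hS

lemma gaussianWidth_mono (hS : S.Nonempty) (hT : IsBounded T) (hST : S ⊆ T) :
    gaussianWidth S ≤ gaussianWidth T :=
  integral_mono (integrable_supportFunction_stdGaussian (hT.subset hST))
    (integrable_supportFunction_stdGaussian hT) (supportFunction_mono hS hT hST)

lemma gaussianWidth_add (hS : S.Nonempty) (hS' : IsBounded S) (hT : T.Nonempty)
    (hT' : IsBounded T) : gaussianWidth (S + T) = gaussianWidth S + gaussianWidth T := by
  simp_rw [gaussianWidth_eq_integral_supportFunction, supportFunction_add hS hS' hT hT']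
  exact integral_add (integrable_supportFunction_stdGaussian hS')
    (integrable_supportFunction_stdGaussian hT')

lemma gaussianWidth_smul {a : ℝ} (ha : 0 ≤ a) (S : Set (EuclideanSpace ℝ ι)) :
    gaussianWidth (a • S) = a * gaussianWidth S := by
  simp_rw [gaussianWidth_eq_integral_supportFunction, supportFunction_smul ha, integral_const_mul]

end GaussianWidth

lemma smul_closedBall_inter_add_smul_closedBall_inter_subset {E : Type*}
    [SeminormedAddCommGroup E] [NormedSpace ℝ E] {K : Set E} (hK : Convex ℝ K) {a b : ℝ}
    (ha : 0 ≤ a) (hb : 0 ≤ b) (hab : a + b = 1)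
    (x y : E) (ε : ℝ) :
    a • (closedBall x ε ∩ K) + b • (closedBall y ε ∩ K) ⊆ closedBall (a • x + b • y) ε ∩ K := by
  rintro _ ⟨_, ⟨s, ⟨hs, hsK⟩, rfl⟩, _, ⟨t, ⟨ht, htK⟩, rfl⟩, rfl⟩
  refine ⟨?_, hK hsK htK ha hb hab⟩
  rw [mem_closedBall] at hs ht ⊢
  calc dist (a • s + b • t) (a • x + b • y) ≤ dist (a • s) (a • x) + dist (b • t) (b • y) :=
        dist_add_add_le _ _ _ _
    _ = a * dist s x + b * dist t y := by
        rw [dist_smul₀, dist_smul₀, Real.norm_of_nonneg ha, Real.norm_of_nonneg hb]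
    _ ≤ a * ε + b * ε := by gcongr
    _ = ε := by rw [← add_mul, hab, one_mul]

/-- for a convex `K` and `ε > 0`, the map `ν ↦ w(B(ν,ε)∩K)` is concave on `K`. -/
theorem stmt_1 {n : ℕ} (K : Set (EuclideanSpace ℝ (Fin n))) (hKconv : Convex ℝ K)
    (ε : ℝ) (hε : 0 < ε)
    (ν₁ ν₂ : EuclideanSpace ℝ (Fin n)) (hν₁ : ν₁ ∈ K) (hν₂ : ν₂ ∈ K)
    (α : ℝ) (hα : α ∈ Set.Icc (0:ℝ) 1) :
    α * gaussianWidth (closedBall ν₁ ε ∩ K) + (1 - α) * gaussianWidth (closedBall ν₂ ε ∩ K) ≤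
      gaussianWidth (closedBall (α • ν₁ + (1 - α) • ν₂) ε ∩ K) := by
  obtain ⟨hα₀, hα₁⟩ := hα
  have hα₁' : 0 ≤ 1 - α := sub_nonneg.2 hα₁
  have hne : ∀ ν ∈ K, (closedBall ν ε ∩ K).Nonempty :=
    fun ν hν => ⟨ν, mem_closedBall_self hε.le, hν⟩
  have hbdd : ∀ ν, IsBounded (closedBall ν ε ∩ K) :=
    fun ν => isBounded_closedBall.subset inter_subset_left
  rw [← gaussianWidth_smul hα₀, ← gaussianWidth_smul hα₁', ← gaussianWidth_add
    ((hne ν₁ hν₁).smul_set) ((hbdd ν₁).smul₀ _) ((hne ν₂ hν₂).smul_set) ((hbdd ν₂).smul₀ _)]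
  exact gaussianWidth_mono ((hne ν₁ hν₁).smul_set.add (hne ν₂ hν₂).smul_set) (hbdd _)
    (smul_closedBall_inter_add_smul_closedBall_inter_subset hKconv hα₀ hα₁'
      (add_sub_cancel α 1) ν₁ ν₂ ε)
end

section
/- Let K ⊂ R^n be convex, μ ∈ K, and ε > 0. For every α ∈ [0,1] and every ν ∈ K, one has α(B(ν,ε)∩K) + (1−α)(B(μ,ε)∩K) ⊆ B(αν+(1−α)μ, ε)∩K. Consequently, if K is centrally symmetric (K = −K), then for all μ ∈ K, w_μ(ε) ≤ w_0(ε), where w_x(ε) = w(B(x,ε)∩K). -/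
open MeasureTheory Metric
open scoped Pointwise

noncomputable def locWidth {ι : Type*} [Fintype ι] (K : Set (EuclideanSpace ℝ ι))
    (μ : EuclideanSpace ℝ ι) (ε : ℝ) : ℝ :=
  gaussianWidth (closedBall μ ε ∩ K)

section Aux

open ProbabilityTheory Real

lemma gaussianReal_map_neg' :
    (gaussianReal 0 1).map (fun x : ℝ => -x) = gaussianReal 0 1 := by
  have h2 : (fun x : ℝ => -x) = ((-1 : ℝ) * ·) := by funext x; ring
  rw [h2, gaussianReal_map_const_mul (μ := 0) (v := 1) (-1)]
  have h3 : (⟨(-1 : ℝ)^2, sq_nonneg _⟩ : NNReal) = 1 := by ext; norm_num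
  rw [show (NNReal.mk ((-1:ℝ)^2) (sq_nonneg _) * 1) = 1 by ext; simp]
  norm_num

lemma integrable_abs_gaussianReal : Integrable (fun x : ℝ => |x|) (gaussianReal 0 1) := by
  rw [gaussianReal_of_var_ne_zero 0 one_ne_zero,
    integrable_withDensity_iff (measurable_gaussianPDF 0 1)
      (ae_of_all _ fun x => ENNReal.ofReal_lt_top)]
  refine Integrable.mono'
    ((integrable_exp_neg_mul_sq (by norm_num : (0:ℝ) < 1/4)).const_mul ((√(2*π*1))⁻¹)) ?_
    (ae_of_all _ fun x => ?_)
  · refine (continuous_abs.mul ?_).aestronglyMeasurable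
    have : Continuous fun x : ℝ => gaussianPDFReal 0 1 x := by
      unfold gaussianPDFReal
      fun_prop
    exact (this.max continuous_const).congr fun x => by
      rw [gaussianPDF, ENNReal.toReal_ofReal (gaussianPDFReal_nonneg 0 1 x)]
      rw [max_eq_left (gaussianPDFReal_nonneg 0 1 x)]
  · rw [gaussianPDF, ENNReal.toReal_ofReal (gaussianPDFReal_nonneg 0 1 x)]
    unfold gaussianPDFReal
    have h1 : (0:ℝ) ≤ (√(2*π*1))⁻¹ := by positivity
    have hx1 : |x| ≤ Real.exp ((1/4) * x^2) := by
      have h2 : |x| ≤ 1 + (1/4) * x^2 := by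
        nlinarith [sq_nonneg (|x| - 2), sq_abs x]
      have h3 := Real.add_one_le_exp ((1/4) * x^2)
      linarith
    have hx2 : |x| * Real.exp (-(x - 0)^2 / (2 * (1:NNReal))) ≤ Real.exp (-(1/4) * x^2) := by
      have : Real.exp ((1/4) * x^2) * Real.exp (-(x - 0)^2 / (2 * (1:NNReal)))
          = Real.exp (-(1/4) * x^2) := by
        rw [← Real.exp_add]
        norm_num
        ring_nf
      rw [← this]
      exact mul_le_mul_of_nonneg_right hx1 (Real.exp_nonneg _)
    rw [Real.norm_eq_abs, abs_of_nonneg (by positivity)]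
    calc |x| * ((√(2*π*1))⁻¹ * Real.exp (-(x - 0)^2 / (2 * (1:NNReal))))
        = (√(2*π*1))⁻¹ * (|x| * Real.exp (-(x - 0)^2 / (2 * (1:NNReal)))) := by ring
      _ ≤ (√(2*π*1))⁻¹ * Real.exp (-(1/4) * x^2) :=
          mul_le_mul_of_nonneg_left hx2 h1

lemma map_pi_eval {n : ℕ} (i : Fin n) :
    (Measure.pi fun _ : Fin n => gaussianReal 0 1).map (Function.eval i) = gaussianReal 0 1 := by
  ext s hs
  rw [Measure.map_apply (measurable_pi_apply i) hs, Set.eval_preimage, Measure.pi_pi]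
  rw [Finset.prod_eq_single i (fun j _ hj => by simp [Function.update_of_ne hj])
    (fun h => absurd (Finset.mem_univ i) h)]
  simp

lemma integrable_eval_pi {n : ℕ} (i : Fin n) :
    Integrable (fun x : Fin n → ℝ => |x i|)
      (Measure.pi fun _ : Fin n => gaussianReal 0 1) := by
  have h : MeasurePreserving (Function.eval i)
      (Measure.pi fun _ : Fin n => gaussianReal 0 1) (gaussianReal 0 1) :=
    ⟨measurable_pi_apply i, map_pi_eval i⟩
  exact (h.integrable_comp continuous_abs.aestronglyMeasurable).mpr integrable_abs_gaussianReal

lemma integrable_norm_stdGaussian_s3 {n : ℕ} :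
    Integrable (fun x : EuclideanSpace ℝ (Fin n) => ‖x‖) (stdGaussian (Fin n)) := by
  rw [_root_.stdGaussian, integrable_map_measure continuous_norm.aestronglyMeasurable
    (MeasurableEquiv.measurable _).aemeasurable]
  refine Integrable.mono' (integrable_finset_sum Finset.univ fun i _ => integrable_eval_pi i)
    ?_ (ae_of_all _ fun x => ?_)
  · exact (continuous_norm.measurable.comp (MeasurableEquiv.measurable _)).aestronglyMeasurable
  · have hx : ∀ i, (MeasurableEquiv.toLp 2 (Fin n → ℝ) x) i = x i := fun i => rfl
    rw [Function.comp_apply, Real.norm_eq_abs, abs_of_nonneg (norm_nonneg _),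
      EuclideanSpace.norm_eq]
    simp only [hx, Real.norm_eq_abs]
    set S := ∑ i, |x i| with hS
    have hS0 : 0 ≤ S := Finset.sum_nonneg fun i _ => abs_nonneg _
    have h1 : ∑ i, |x i| ^ 2 ≤ S ^ 2 := by
      calc ∑ i, |x i| ^ 2 ≤ ∑ i, |x i| * S := by
            refine Finset.sum_le_sum fun i _ => ?_
            rw [sq]
            exact mul_le_mul_of_nonneg_left
              (Finset.single_le_sum (fun j _ => abs_nonneg (x j)) (Finset.mem_univ i))
              (abs_nonneg _)
        _ = S ^ 2 := by rw [← Finset.sum_mul, sq]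
    calc √(∑ i, |x i| ^ 2) ≤ √(S ^ 2) := Real.sqrt_le_sqrt h1
      _ = S := by rw [Real.sqrt_sq hS0]

lemma stdGaussian_neg {n : ℕ} :
    MeasurePreserving (fun x : EuclideanSpace ℝ (Fin n) => -x)
      (stdGaussian (Fin n)) (stdGaussian (Fin n)) := by
  set e := (MeasurableEquiv.toLp 2 (Fin n → ℝ)).symm with he_def
  have hpi : MeasurePreserving (fun a : Fin n → ℝ => fun i => -(a i))
      (Measure.pi fun _ => gaussianReal 0 1) (Measure.pi fun _ => gaussianReal 0 1) :=
    measurePreserving_pi _ _ fun i => ⟨measurable_neg, gaussianReal_map_neg'⟩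
  have he : MeasurePreserving e.symm (Measure.pi fun _ => gaussianReal 0 1)
      (stdGaussian (Fin n)) := ⟨e.symm.measurable, rfl⟩
  have he' : MeasurePreserving e (stdGaussian (Fin n))
      (Measure.pi fun _ => gaussianReal 0 1) := by
    refine ⟨e.measurable, ?_⟩
    rw [_root_.stdGaussian, Measure.map_map e.measurable (MeasurableEquiv.toLp 2 (Fin n → ℝ)).measurable]
    simp [MeasurableEquiv.self_comp_symm, MeasurableEquiv.symm_comp_self, he_def]
  have h := (he.comp hpi).comp he'
  convert h using 1
  ext x i
  simp [he_def]

end Aux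

/-- for convex `K`, `α ∈ [0,1]` and `ν, μ ∈ K`:
`α·(B(ν,ε)∩K) + (1−α)·(B(μ,ε)∩K) ⊆ B(αν+(1−α)μ,ε)∩K`; consequently, if `K` is centrally
symmetric, `w_μ(ε) ≤ w_0(ε)` for every `μ ∈ K`. -/
theorem stmt_3 {n : ℕ} (K : Set (EuclideanSpace ℝ (Fin n))) (hKconv : Convex ℝ K)
    (ε : ℝ) (hε : 0 < ε) :
    (∀ α ∈ Set.Icc (0:ℝ) 1, ∀ ν ∈ K, ∀ μ ∈ K,
      α • (closedBall ν ε ∩ K) + (1 - α) • (closedBall μ ε ∩ K) ⊆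
        closedBall (α • ν + (1 - α) • μ) ε ∩ K) ∧
    ((∀ x ∈ K, -x ∈ K) → ∀ μ ∈ K, locWidth K μ ε ≤ locWidth K 0 ε) := by
  have hball : ∀ α ∈ Set.Icc (0:ℝ) 1, ∀ ν ∈ K, ∀ μ ∈ K,
      α • (closedBall ν ε ∩ K) + (1 - α) • (closedBall μ ε ∩ K) ⊆
        closedBall (α • ν + (1 - α) • μ) ε ∩ K := by
    rintro α ⟨hα0, hα1⟩ ν hν μ hμ x hx
    have h1α : (0:ℝ) ≤ 1 - α := by linarith
    obtain ⟨a, ha, b, hb, rfl⟩ := hx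
    obtain ⟨a', ⟨ha'b, ha'K⟩, rfl⟩ := ha
    obtain ⟨b', ⟨hb'b, hb'K⟩, rfl⟩ := hb
    refine ⟨?_, hKconv ha'K hb'K hα0 h1α (by ring)⟩
    rw [mem_closedBall, dist_eq_norm]
    have hre : α • a' + (1-α) • b' - (α • ν + (1-α) • μ)
        = α • (a' - ν) + (1-α) • (b' - μ) := by module
    rw [hre]
    have hna : ‖a' - ν‖ ≤ ε := mem_closedBall_iff_norm.mp ha'b
    have hnb : ‖b' - μ‖ ≤ ε := mem_closedBall_iff_norm.mp hb'b
    calc ‖α • (a' - ν) + (1-α) • (b' - μ)‖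
        ≤ ‖α • (a' - ν)‖ + ‖(1-α) • (b' - μ)‖ := norm_add_le _ _
      _ = α * ‖a' - ν‖ + (1-α) * ‖b' - μ‖ := by
          rw [norm_smul, norm_smul, Real.norm_of_nonneg hα0, Real.norm_of_nonneg h1α]
      _ ≤ α * ε + (1-α) * ε := by
          gcongr
      _ = ε := by ring
  refine ⟨hball, ?_⟩
  intro hsym μ hμ
  set M := stdGaussian (Fin n) with hM
  have hμK : -μ ∈ K := hsym μ hμ
  have h0K : (0 : EuclideanSpace ℝ (Fin n)) ∈ K := by
    have h := hKconv hμ hμK (by norm_num : (0:ℝ) ≤ 1/2) (by norm_num : (0:ℝ) ≤ 1/2)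
      (by norm_num)
    simpa [smul_neg] using h
  set T : EuclideanSpace ℝ (Fin n) → Set (EuclideanSpace ℝ (Fin n)) :=
    fun c => closedBall c ε ∩ K with hT
  have hmemT : ∀ c ∈ K, c ∈ T c := fun c hc => ⟨mem_closedBall_self hε.le, hc⟩
  have hboundT : ∀ c, ∀ t ∈ T c, ‖t‖ ≤ ‖c‖ + ε := by
    intro c t ht
    have h := mem_closedBall_iff_norm.mp ht.1
    calc ‖t‖ = ‖(t - c) + c‖ := by rw [sub_add_cancel]
      _ ≤ ‖t - c‖ + ‖c‖ := norm_add_le _ _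
      _ ≤ ‖c‖ + ε := by linarith
  have hbdd : ∀ c x, BddAbove ((fun t => (inner ℝ x t : ℝ)) '' T c) := by
    intro c x
    refine ⟨‖x‖ * (‖c‖ + ε), ?_⟩
    rintro r ⟨t, ht, rfl⟩
    calc (inner ℝ x t : ℝ) ≤ ‖x‖ * ‖t‖ := real_inner_le_norm x t
      _ ≤ ‖x‖ * (‖c‖ + ε) := mul_le_mul_of_nonneg_left (hboundT c t ht) (norm_nonneg x)
  set g : EuclideanSpace ℝ (Fin n) → EuclideanSpace ℝ (Fin n) → ℝ :=
    fun c x => sSup ((fun t => (inner ℝ x t : ℝ)) '' T c) with hg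
  have habs : ∀ c ∈ K, ∀ x, |g c x| ≤ (‖c‖ + ε) * ‖x‖ := by
    intro c hc x
    rw [abs_le]
    constructor
    · have h1 : (inner ℝ x c : ℝ) ≤ g c x := le_csSup (hbdd c x) ⟨c, hmemT c hc, rfl⟩
      have h2 : |(inner ℝ x c : ℝ)| ≤ ‖x‖ * ‖c‖ := abs_real_inner_le_norm x c
      have h3 := neg_abs_le (inner ℝ x c : ℝ)
      nlinarith [norm_nonneg x, norm_nonneg c, hε.le]
    · refine csSup_le (Set.Nonempty.image _ ⟨c, hmemT c hc⟩) ?_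
      rintro r ⟨t, ht, rfl⟩
      calc (inner ℝ x t : ℝ) ≤ ‖x‖ * ‖t‖ := real_inner_le_norm x t
        _ ≤ ‖x‖ * (‖c‖ + ε) := mul_le_mul_of_nonneg_left (hboundT c t ht) (norm_nonneg x)
        _ = (‖c‖ + ε) * ‖x‖ := by ring
  have hlip : ∀ c ∈ K, ∀ x y, g c x ≤ g c y + (‖c‖ + ε) * ‖x - y‖ := by
    intro c hc x y
    refine csSup_le (Set.Nonempty.image _ ⟨c, hmemT c hc⟩) ?_
    rintro r ⟨t, ht, rfl⟩
    have h1 : (inner ℝ x t : ℝ) = (inner ℝ y t : ℝ) + (inner ℝ (x - y) t : ℝ) := by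
      rw [inner_sub_left]; ring
    have h2 : (inner ℝ y t : ℝ) ≤ g c y := le_csSup (hbdd c y) ⟨t, ht, rfl⟩
    have h3 : (inner ℝ (x - y) t : ℝ) ≤ ‖x - y‖ * ‖t‖ := real_inner_le_norm _ _
    have h4 : ‖x - y‖ * ‖t‖ ≤ ‖x - y‖ * (‖c‖ + ε) :=
      mul_le_mul_of_nonneg_left (hboundT c t ht) (norm_nonneg _)
    nlinarith
  have hcont : ∀ c ∈ K, Continuous (g c) := by
    intro c hc
    have hC : (0:ℝ) ≤ ‖c‖ + ε := by positivity
    refine LipschitzWith.continuous (K := Real.toNNReal (‖c‖ + ε))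
      (LipschitzWith.of_dist_le_mul fun x y => ?_)
    rw [Real.dist_eq, Real.coe_toNNReal _ hC, dist_eq_norm, abs_sub_le_iff]
    have h1 := hlip c hc x y
    have h2 := hlip c hc y x
    have h3 : ‖y - x‖ = ‖x - y‖ := norm_sub_rev y x
    rw [h3] at h2
    constructor <;> linarith
  have hint : ∀ c ∈ K, Integrable (g c) M := by
    intro c hc
    refine Integrable.mono' (integrable_norm_stdGaussian_s3.const_mul (‖c‖ + ε))
      ((hcont c hc).aestronglyMeasurable) (ae_of_all _ fun x => ?_)
    rw [Real.norm_eq_abs]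
    exact habs c hc x
  have hkey : ∀ x, g μ x + g (-μ) x ≤ 2 * g 0 x := by
    intro x
    have h1 : ∀ t ∈ T μ, ∀ s ∈ T (-μ), (inner ℝ x t : ℝ) + (inner ℝ x s : ℝ) ≤ 2 * g 0 x := by
      intro t ht s hs
      have htb : ‖t - μ‖ ≤ ε := mem_closedBall_iff_norm.mp ht.1
      have hsb : ‖s - -μ‖ ≤ ε := mem_closedBall_iff_norm.mp hs.1
      have hmem : (1/2 : ℝ) • s + (1/2 : ℝ) • t ∈ T 0 := by
        refine ⟨?_, hKconv hs.2 ht.2 (by norm_num) (by norm_num) (by norm_num)⟩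
        rw [mem_closedBall_iff_norm, sub_zero]
        have he : (1/2 : ℝ) • s + (1/2 : ℝ) • t
            = (1/2 : ℝ) • (s - -μ) + (1/2 : ℝ) • (t - μ) := by module
        rw [he]
        calc ‖(1/2 : ℝ) • (s - -μ) + (1/2 : ℝ) • (t - μ)‖
            ≤ ‖(1/2 : ℝ) • (s - -μ)‖ + ‖(1/2 : ℝ) • (t - μ)‖ := norm_add_le _ _
          _ = (1/2) * ‖s - -μ‖ + (1/2) * ‖t - μ‖ := by
              rw [norm_smul, norm_smul]; norm_num
          _ ≤ ε := by linarith
      have h2 : (inner ℝ x ((1/2 : ℝ) • s + (1/2 : ℝ) • t) : ℝ) ≤ g 0 x :=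
        le_csSup (hbdd 0 x) ⟨_, hmem, rfl⟩
      have h3 : (inner ℝ x ((1/2 : ℝ) • s + (1/2 : ℝ) • t) : ℝ)
          = (1/2) * (inner ℝ x s : ℝ) + (1/2) * (inner ℝ x t : ℝ) := by
        rw [inner_add_right, real_inner_smul_right, real_inner_smul_right]
      linarith
    have h4 : g μ x ≤ 2 * g 0 x - g (-μ) x := by
      refine csSup_le (Set.Nonempty.image _ ⟨μ, hmemT μ hμ⟩) ?_
      rintro r ⟨t, ht, rfl⟩
      have h5 : g (-μ) x ≤ 2 * g 0 x - (inner ℝ x t : ℝ) := by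
        refine csSup_le (Set.Nonempty.image _ ⟨-μ, hmemT _ hμK⟩) ?_
        rintro r' ⟨s, hs, rfl⟩
        linarith [h1 t ht s hs]
      linarith
    linarith
  have hTneg : T (-μ) = -(T μ) := by
    ext t
    simp only [hT, Set.mem_neg, Set.mem_inter_iff, mem_closedBall]
    constructor
    · rintro ⟨h1, h2⟩
      refine ⟨?_, hsym t h2⟩
      rw [show dist (-t) μ = dist t (-μ) by rw [← dist_neg_neg t (-μ), neg_neg]]
      exact h1
    · rintro ⟨h1, h2⟩
      refine ⟨?_, by simpa using hsym _ h2⟩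
      rw [show dist t (-μ) = dist (-t) μ by rw [← dist_neg_neg t (-μ), neg_neg]]
      exact h1
  have hgneg : ∀ x, g (-μ) x = g μ (-x) := by
    intro x
    have himg : (fun t => (inner ℝ x t : ℝ)) '' T (-μ)
        = (fun t => (inner ℝ (-x) t : ℝ)) '' T μ := by
      rw [hTneg]
      ext r
      constructor
      · rintro ⟨t, ht, rfl⟩
        exact ⟨-t, ht, by simp⟩
      · rintro ⟨t, ht, rfl⟩
        refine ⟨-t, by simpa using ht, by simp⟩
    show sSup ((fun t => (inner ℝ x t : ℝ)) '' T (-μ)) = sSup ((fun t => (inner ℝ (-x) t : ℝ)) '' T μ)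
    rw [himg]
  have hneg : MeasurePreserving (fun x : EuclideanSpace ℝ (Fin n) => -x) M M := stdGaussian_neg
  have hembneg : MeasurableEmbedding (fun x : EuclideanSpace ℝ (Fin n) => -x) :=
    (Homeomorph.neg (EuclideanSpace ℝ (Fin n))).measurableEmbedding
  have e1 : ∫ x, g μ (-x) ∂M = ∫ x, g μ x ∂M :=
    hneg.integral_comp hembneg (g μ)
  have e2 : Integrable (fun x => g μ (-x)) M :=
    (hneg.integrable_comp (hcont μ hμ).aestronglyMeasurable).mpr (hint μ hμ)
  have h5 : ∫ x, (g μ x + g μ (-x)) ∂M ≤ ∫ x, 2 * g 0 x ∂M := by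
    refine integral_mono ((hint μ hμ).add e2) ((hint 0 h0K).const_mul 2) fun x => ?_
    have := hkey x
    rw [hgneg x] at this
    exact this
  rw [integral_add (hint μ hμ) e2, e1, integral_const_mul] at h5
  have hfin : ∫ x, g μ x ∂M ≤ ∫ x, g 0 x ∂M := by linarith
  exact hfin
end

section
/- Let K ⊂ R^n be a closed convex set with diameter d containing a segment of length 2ε for ε = (σ ∧ d)/κ with κ > max(2, √(1/log 2)). Then the critical radius ε* = sup{ε : ε²/σ² ≤ log M^loc(ε)} satisfies ε* ≳ σ ∧ d, i.e., ε* ≥ c·min(σ,d) for an absolute constant c > 0. -/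
/-!
Any two points of `K` at distance `2ε` together with their midpoint `θ ∈ K` witness
`M^loc(ε) ≥ 2` as soon as `c* ≥ 1`; since `log 2 > 1/16`, the radius `ε = (σ ∧ d)/4` then lies
in the critical set, and such a pair exists by convexity because `2ε < d`. The critical set is
bounded above by `c* d`, since beyond that radius `ε/c*`-separated subsets of `K` are singletons.
-/

open MeasureTheory Metric

/-- packing number: the largest cardinality of a subset of `T` with pairwise distances `> η` -/
noncomputable def packingNum {E : Type*} [PseudoMetricSpace E] (η : ℝ) (T : Set E) : ℕ :=
  sSup {N | ∃ S : Finset E, ↑S ⊆ T ∧ (∀ x ∈ S, ∀ y ∈ S, x ≠ y → η < dist x y) ∧ S.card = N}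

/-- local packing number `M^loc(ε) = sup_{θ∈K} M(ε/c*, B(θ,ε)∩K)` -/
noncomputable def Mloc {E : Type*} [PseudoMetricSpace E] (cstar : ℝ) (K : Set E) (ε : ℝ) : ℕ :=
  sSup {N | ∃ θ ∈ K, packingNum (ε / cstar) (closedBall θ ε ∩ K) = N}

section Packing

variable {E : Type*} [PseudoMetricSpace E]

lemma TotallyBounded.exists_card_le_of_pairwise_lt_dist {T : Set E} (hT : TotallyBounded T)
    {η : ℝ} (hη : 0 < η) :
    ∃ M : ℕ, ∀ S : Finset E, ↑S ⊆ T → (S : Set E).Pairwise (η < dist · ·) → S.card ≤ M := by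
  obtain ⟨t, htf, hcov⟩ := totallyBounded_iff.mp hT (η / 2) (half_pos hη)
  have hnear : ∀ x ∈ T, ∃ y ∈ htf.toFinset, dist x y < η / 2 := fun x hx => by
    simpa using hcov hx
  choose! f hf_mem hf_dist using hnear
  refine ⟨htf.toFinset.card, fun S hST hS => Finset.card_le_card_of_injOn f
    (fun x hx => hf_mem x (hST hx)) fun a ha b hb hab => ?_⟩
  by_contra hne
  have : dist a b < η := calc
    dist a b ≤ dist a (f a) + dist b (f b) := by rw [hab]; exact dist_triangle_right _ _ _
    _ < η / 2 + η / 2 := add_lt_add (hf_dist a (hST ha)) (hf_dist b (hST hb))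
    _ = η := add_halves η
  exact this.not_gt (hS ha hb hne)

lemma le_packingNum {T : Set E} (hT : TotallyBounded T) {η : ℝ} (hη : 0 < η) {S : Finset E}
    (hST : ↑S ⊆ T) (hS : (S : Set E).Pairwise (η < dist · ·)) :
    S.card ≤ packingNum η T := by
  obtain ⟨M, hM⟩ := hT.exists_card_le_of_pairwise_lt_dist hη
  refine le_csSup ⟨M, ?_⟩ ⟨S, hST, hS, rfl⟩
  rintro _ ⟨S', hS'T, hS', rfl⟩
  exact hM S' hS'T hS'

lemma packingNum_le_one {T : Set E} {η : ℝ} (hT : ∀ x ∈ T, ∀ y ∈ T, dist x y ≤ η) :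
    packingNum η T ≤ 1 := by
  refine csSup_le' ?_
  rintro _ ⟨S, hST, hS, rfl⟩
  refine Finset.card_le_one.mpr fun x hx y hy => ?_
  by_contra hne
  exact (hT x (hST hx) y (hST hy)).not_gt (hS x hx y hy hne)

lemma packingNum_le_Mloc {K : Set E} (hK : TotallyBounded K) {cstar ε : ℝ}
    (hη : 0 < ε / cstar) {θ : E} (hθ : θ ∈ K) :
    packingNum (ε / cstar) (closedBall θ ε ∩ K) ≤ Mloc cstar K ε := by
  obtain ⟨M, hM⟩ := hK.exists_card_le_of_pairwise_lt_dist hη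
  refine le_csSup ⟨M, ?_⟩ ⟨θ, hθ, rfl⟩
  rintro _ ⟨θ', -, rfl⟩
  refine csSup_le' ?_
  rintro _ ⟨S, hST, hS, rfl⟩
  exact hM S (hST.trans Set.inter_subset_right) hS

lemma Mloc_le_one {K : Set E} (hK : Bornology.IsBounded K) {cstar ε : ℝ}
    (hdiam : diam K ≤ ε / cstar) : Mloc cstar K ε ≤ 1 := by
  refine csSup_le' ?_
  rintro _ ⟨θ, -, rfl⟩
  exact packingNum_le_one fun x hx y hy =>
    (dist_le_diam_of_mem hK hx.2 hy.2).trans hdiam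

end Packing

section Convex

variable {E : Type*} [NormedAddCommGroup E] [NormedSpace ℝ E]

lemma Convex.exists_dist_eq {K : Set E} (hK : Convex ℝ K) {r : ℝ} (hr₀ : 0 ≤ r)
    (hr : r < diam K) : ∃ a ∈ K, ∃ b ∈ K, dist a b = r := by
  obtain ⟨a, ha, b, hb, hab⟩ : ∃ a ∈ K, ∃ b ∈ K, r < dist a b := by
    by_contra! h
    exact hr.not_ge (diam_le_of_forall_dist_le hr₀ h)
  have hab₀ : 0 < dist a b := hr₀.trans_lt hab
  have ht : r / dist a b ∈ Set.Icc (0 : ℝ) 1 :=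
    ⟨by positivity, (div_le_one hab₀).mpr hab.le⟩
  refine ⟨a, ha, AffineMap.lineMap a b (r / dist a b), hK.lineMap_mem ha hb ht, ?_⟩
  rw [dist_comm, dist_lineMap_left, Real.norm_of_nonneg ht.1, div_mul_cancel₀ _ hab₀.ne']

lemma two_le_Mloc {K : Set E} (hK : Convex ℝ K) (hKb : TotallyBounded K) {cstar ε : ℝ}
    (hcstar : 1 ≤ cstar) (hε : 0 < ε) {a b : E} (ha : a ∈ K) (hb : b ∈ K)
    (hab : dist a b = 2 * ε) : 2 ≤ Mloc cstar K ε := by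
  classical
  have hη : ε / cstar ≤ ε := div_le_self hε.le hcstar
  have hne : a ≠ b := dist_pos.mp (by linarith)
  have hθ : midpoint ℝ a b ∈ K := hK.segment_subset ha hb (midpoint_mem_segment a b)
  have hsub : (({a, b} : Finset E) : Set E) ⊆ closedBall (midpoint ℝ a b) ε ∩ K := by
    rw [Finset.coe_pair, Set.pair_subset_iff]
    exact ⟨⟨by simp [hab], ha⟩, ⟨by simp [hab], hb⟩⟩
  have hsep : (({a, b} : Finset E) : Set E).Pairwise (ε / cstar < dist · ·) := by
    rw [Finset.coe_pair]
    exact Set.pairwise_pair.mpr fun _ => ⟨by linarith, by rw [dist_comm]; linarith⟩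
  calc 2 = ({a, b} : Finset E).card := (Finset.card_pair hne).symm
    _ ≤ packingNum (ε / cstar) (closedBall (midpoint ℝ a b) ε ∩ K) :=
      le_packingNum (hKb.subset Set.inter_subset_right) (by positivity) hsub hsep
    _ ≤ Mloc cstar K ε := packingNum_le_Mloc hKb (by positivity) hθ

end Convex

def criticalSet {E : Type*} [PseudoMetricSpace E] (σ cstar : ℝ) (K : Set E) : Set ℝ :=
  {ε : ℝ | 0 < ε ∧ ε ^ 2 / σ ^ 2 ≤ Real.log (Mloc cstar K ε)}

lemma bddAbove_criticalSet {E : Type*} [PseudoMetricSpace E] {K : Set E}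
    (hK : Bornology.IsBounded K) {σ cstar : ℝ} (hσ : σ ≠ 0) (hcstar : 0 < cstar) :
    BddAbove (criticalSet σ cstar K) := by
  refine ⟨cstar * diam K, fun ε ⟨hε, hcrit⟩ => ?_⟩
  by_contra! hlarge
  have hMloc : Mloc cstar K ε ≤ 1 :=
    Mloc_le_one hK ((le_div_iff₀' hcstar).mpr hlarge.le)
  have hlog : Real.log (Mloc cstar K ε) ≤ 0 :=
    Real.log_nonpos (Nat.cast_nonneg _) (by exact_mod_cast hMloc)
  have : 0 < ε ^ 2 / σ ^ 2 := by positivity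
  linarith

/-- there is an absolute constant `c > 0` such that for every sufficiently large
`c*`, any closed convex `K ⊂ ℝⁿ` (diameter `d`) containing a segment of length
`2·(σ∧d)/κ` with `κ > max(2, √(1/log 2))` has critical radius
`ε* = sup{ε : ε²/σ² ≤ log M^loc(ε)} ≥ c·(σ ∧ d)`. -/
theorem stmt_6 :
    ∃ c > (0:ℝ), ∃ C₀ : ℝ, ∀ cstar : ℝ, C₀ ≤ cstar →
      ∀ (n : ℕ) (K : Set (EuclideanSpace ℝ (Fin n))),
        IsClosed K → Convex ℝ K → Bornology.IsBounded K →
        ∀ σ : ℝ, 0 < σ → ∀ κ : ℝ, max 2 (Real.sqrt (1 / Real.log 2)) < κ →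
        (∃ x ∈ K, ∃ y ∈ K, dist x y = 2 * (min σ (Metric.diam K) / κ)) →
        c * min σ (Metric.diam K) ≤
          sSup {ε : ℝ | 0 < ε ∧ ε ^ 2 / σ ^ 2 ≤ Real.log (Mloc cstar K ε)} := by
  refine ⟨1 / 4, by norm_num, 1, fun cstar hcstar n K _ hconv hbdd σ hσ _ _ _ => ?_⟩
  change _ ≤ sSup (criticalSet σ cstar K)
  set m := min σ (diam K)
  rcases le_or_gt m 0 with hm | hm
  · exact (by linarith : 1 / 4 * m ≤ 0).trans (Real.sSup_nonneg fun ε hε => hε.1.le)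
  obtain ⟨a, ha, b, hb, hab⟩ := hconv.exists_dist_eq (r := 2 * (1 / 4 * m)) (by positivity)
    (by linarith [min_le_right σ (diam K)])
  have hMloc := two_le_Mloc hconv (hbdd.isCompact_closure.totallyBounded.subset subset_closure)
    hcstar (by positivity) ha hb hab
  refine le_csSup (bddAbove_criticalSet hbdd hσ.ne' (by linarith)) ⟨by positivity, ?_⟩
  calc (1 / 4 * m) ^ 2 / σ ^ 2 ≤ 1 / 16 := by
        rw [div_le_iff₀ (by positivity)]
        nlinarith [min_le_left σ (diam K)]
    _ ≤ Real.log 2 := by linarith [Real.log_two_gt_d9]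
    _ ≤ Real.log (Mloc cstar K (1 / 4 * m)) := Real.log_le_log two_pos (by exact_mod_cast hMloc)
end
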